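/- Let P be an H-group and N a normal sub-H-group of P, i.e., for every g ∈ P and n ∈ N, the element g·n·g⁻¹ is joined by a path in P to a point of N. Then the set P/N of left cosets of N, with multiplication (g₁N)·(g₂N) = (g₁·g₂)N and inverse (gN)⁻¹ = η(g)N, is a well-defined group whose identity is the coset p₀N. -/

import Mathlib

/-!
Passing to path components turns the H-group axioms, which hold up to pointed homotopy, into
honest group axioms, so `π₀ P` is a group, and the path components meeting `N` form a subgroup
`K` of it, normal because `N` is normal. The coset `gN` is the fibre over the class
of `g` of the map `P → π₀ P ⧸ K`, so the cosets of `N` are in bijection with `π₀ P ⧸ K`, and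
the group structure of `π₀ P ⧸ K` is transported along this bijection.
-/


open ContinuousMap

universe u v

/-- An H-group: a pointed space with continuous multiplication, homotopy inverse and the
constant map as homotopy identity, satisfying the H-group axioms up to pointed homotopy. -/
structure HGroup (P : Type u) [TopologicalSpace P] where
  pt : P
  mul : C(P × P, P)
  inv : C(P, P)
  mul_pt : mul (pt, pt) = pt
  inv_pt : inv pt = pt
  left_id : HomotopicRel ⟨fun g => mul (pt, g), by fun_prop⟩ (ContinuousMap.id P) {pt}
  right_id : HomotopicRel ⟨fun g => mul (g, pt), by fun_prop⟩ (ContinuousMap.id P) {pt}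
  left_inv : HomotopicRel ⟨fun g => mul (inv g, g), by fun_prop⟩ (const P pt) {pt}
  right_inv : HomotopicRel ⟨fun g => mul (g, inv g), by fun_prop⟩ (const P pt) {pt}
  assoc : HomotopicRel ⟨fun p : P × P × P => mul (mul (p.1, p.2.1), p.2.2), by fun_prop⟩
      ⟨fun p : P × P × P => mul (p.1, mul (p.2.1, p.2.2)), by fun_prop⟩ {(pt, pt, pt)}

/-- `Jtn S g` : `g` homotopically belongs to `S`, i.e. there is a path in the ambient
space from `g` to a point of `S`. -/
def Jtn {P : Type u} [TopologicalSpace P] (S : Set P) (g : P) : Prop := ∃ s ∈ S, Joined g s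

/-- The class of `g` in `π₀`. -/
def pc {P : Type u} [TopologicalSpace P] (g : P) : ZerothHomotopy P :=
  Quotient.mk (pathSetoid P) g

namespace HGroup
variable {P : Type u} [TopologicalSpace P]

/-- The left coset `g·S = {g' | η(g)·g' ∈̃ S}`. -/
def lcoset (H : HGroup P) (g : P) (S : Set P) : Set P :=
  {g' | Jtn S (H.mul (H.inv g, g'))}

/-- The right coset `S·g = {g' | g'·η(g) ∈̃ S}`. -/
def rcoset (H : HGroup P) (S : Set P) (g : P) : Set P :=
  {g' | Jtn S (H.mul (g', H.inv g))}

/-- The pointwise product of two subsets. -/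
def mulSet (H : HGroup P) (A B : Set P) : Set P := {p | ∃ a ∈ A, ∃ b ∈ B, p = H.mul (a, b)}

end HGroup

/-- A subset is saturated if it is a union of path components of the ambient space. -/
def Saturated {P : Type u} [TopologicalSpace P] (A : Set P) : Prop :=
  ∀ x ∈ A, ∀ y, Joined x y → y ∈ A

/-- A sub-H-group: a pointed subspace which is itself an H-group such that the
inclusion is an H-homomorphism (via pointed homotopies). -/
structure SubHGroup {P : Type u} [TopologicalSpace P] (H : HGroup P) where
  carrier : Set P
  struct : HGroup carrier
  pt_val : (struct.pt : P) = H.pt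
  incl_mul : HomotopicRel
    ⟨fun p : carrier × carrier => (struct.mul p : P), by fun_prop⟩
    ⟨fun p : carrier × carrier => H.mul (p.1, p.2), by fun_prop⟩
    {(struct.pt, struct.pt)}
  incl_inv : HomotopicRel
    ⟨fun x : carrier => (struct.inv x : P), by fun_prop⟩
    ⟨fun x : carrier => H.inv x, by fun_prop⟩
    {struct.pt}

/-- A sub-H-group is normal if `g·n·g⁻¹` homotopically belongs to it for all `g`, `n`. -/
def SubHGroup.Normal {P : Type u} [TopologicalSpace P] {H : HGroup P}
    (N : SubHGroup H) : Prop :=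
  ∀ g : P, ∀ n ∈ N.carrier, Jtn N.carrier (H.mul (H.mul (g, n), H.inv g))

/-- The set of left cosets of `S` in `P`. -/
def Cosets {P : Type u} [TopologicalSpace P] (H : HGroup P) (S : Set P) :=
  {T : Set P // ∃ g : P, T = H.lcoset g S}

/-- The left coset of `S` represented by `g`, as an element of `Cosets H S`. -/
def cst {P : Type u} [TopologicalSpace P] (H : HGroup P) (S : Set P) (g : P) : Cosets H S :=
  ⟨H.lcoset g S, g, rfl⟩

/-- The coset equivalence relation: `g₁ ∼ g₂` iff `g₁·η(g₂) ∈̃ S`. -/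
def cosetRel {P : Type u} [TopologicalSpace P] (H : HGroup P) (S : Set P)
    (g₁ g₂ : P) : Prop :=
  Jtn S (H.mul (g₁, H.inv g₂))

open Function

theorem ContinuousMap.HomotopicRel.joined {X Y : Type*} [TopologicalSpace X]
    [TopologicalSpace Y] {f g : C(X, Y)} {S : Set X} (h : HomotopicRel f g S) (x : X) :
    Joined (f x) (g x) :=
  let ⟨F⟩ := h; ⟨F.toHomotopy.evalAt x⟩

theorem jtn_iff_pc_mem_image {P : Type u} [TopologicalSpace P] {S : Set P} {x : P} :
    Jtn S x ↔ pc x ∈ pc '' S :=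
  ⟨fun ⟨s, hs, hxs⟩ => ⟨s, hs, (Quotient.sound hxs).symm⟩,
    fun ⟨s, hs, hsx⟩ => ⟨s, hs, (Quotient.exact hsx).symm⟩⟩

namespace Function.Surjective
variable {α β : Type*} {q : α → β}

noncomputable def fibersEquiv (hq : Surjective q) :
    {T : Set α // ∃ a, T = q ⁻¹' {q a}} ≃ β where
  toFun T := q T.2.choose
  invFun b := ⟨q ⁻¹' {b}, (hq b).choose, by rw [(hq b).choose_spec]⟩
  left_inv T := Subtype.ext T.2.choose_spec.symm
  right_inv b := by
    dsimp only
    generalize_proofs hb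
    obtain ⟨a, rfl⟩ := hq b
    exact ((Set.ext_iff.mp hb.choose_spec a).mp rfl).symm

theorem fibersEquiv_apply_of_mem (hq : Surjective q)
    {T : {T : Set α // ∃ a, T = q ⁻¹' {q a}}} {a : α} (ha : a ∈ T.1) : hq.fibersEquiv T = q a :=
  ((T.2.choose_spec ▸ ha : a ∈ q ⁻¹' {q T.2.choose}) : q a = q T.2.choose).symm

end Function.Surjective

namespace HGroup
variable {P : Type u} [TopologicalSpace P] (H : HGroup P)

/-- `π₀ P`, as a separate type because its group structure depends on `H`. -/
def Pi0 (_ : HGroup P) : Type u := ZerothHomotopy P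

instance : Group H.Pi0 where
  mul := Quotient.map₂ (fun a b => H.mul (a, b)) fun _ _ ⟨p⟩ _ _ ⟨q⟩ =>
    ⟨(p.prod q).map H.mul.continuous⟩
  one := pc H.pt
  inv := Quotient.map H.inv fun _ _ ⟨p⟩ => ⟨p.map H.inv.continuous⟩
  mul_assoc a b c := by
    induction a using Quotient.inductionOn with | h a =>
    induction b using Quotient.inductionOn with | h b =>
    induction c using Quotient.inductionOn with | h c =>
    exact Quotient.sound (H.assoc.joined (a, b, c))
  one_mul a := Quotient.inductionOn a fun a => Quotient.sound (H.left_id.joined a)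
  mul_one a := Quotient.inductionOn a fun a => Quotient.sound (H.right_id.joined a)
  inv_mul_cancel a := Quotient.inductionOn a fun a => Quotient.sound (H.left_inv.joined a)

def toPi0 (g : P) : H.Pi0 := pc g

theorem toPi0_mul (a b : P) : H.toPi0 (H.mul (a, b)) = H.toPi0 a * H.toPi0 b := rfl

theorem toPi0_inv (a : P) : H.toPi0 (H.inv a) = (H.toPi0 a)⁻¹ := rfl

theorem toPi0_surjective : Surjective H.toPi0 := Quotient.mk_surjective

end HGroup

namespace SubHGroup
variable {P : Type u} [TopologicalSpace P] {H : HGroup P} (N : SubHGroup H)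

theorem pt_mem : H.pt ∈ N.carrier := N.pt_val ▸ N.struct.pt.2

def pi0Subgroup : Subgroup H.Pi0 where
  carrier := H.toPi0 '' N.carrier
  one_mem' := ⟨H.pt, N.pt_mem, rfl⟩
  mul_mem' := by
    rintro _ _ ⟨x, hx, rfl⟩ ⟨y, hy, rfl⟩
    exact ⟨_, (N.struct.mul (⟨x, hx⟩, ⟨y, hy⟩)).2,
      Quotient.sound (N.incl_mul.joined (⟨x, hx⟩, ⟨y, hy⟩))⟩
  inv_mem' := by
    rintro _ ⟨x, hx, rfl⟩
    exact ⟨_, (N.struct.inv ⟨x, hx⟩).2, Quotient.sound (N.incl_inv.joined ⟨x, hx⟩)⟩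

theorem jtn_iff_toPi0_mem {x : P} : Jtn N.carrier x ↔ H.toPi0 x ∈ N.pi0Subgroup :=
  jtn_iff_pc_mem_image

theorem Normal.pi0Subgroup_normal {N : SubHGroup H} (hN : N.Normal) :
    N.pi0Subgroup.Normal where
  conj_mem := by
    rintro _ ⟨n, hn, rfl⟩ g
    obtain ⟨g, rfl⟩ := H.toPi0_surjective g
    exact N.jtn_iff_toPi0_mem.mp (hN g n hn)

def toQuotient (g : P) : H.Pi0 ⧸ N.pi0Subgroup := H.toPi0 g

theorem toQuotient_surjective : Surjective N.toQuotient :=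
  QuotientGroup.mk_surjective.comp H.toPi0_surjective

theorem lcoset_eq_preimage (g : P) :
    H.lcoset g N.carrier = N.toQuotient ⁻¹' {N.toQuotient g} := by
  ext g'
  rw [Set.mem_preimage, Set.mem_singleton_iff, eq_comm, toQuotient, toQuotient,
    QuotientGroup.eq, ← H.toPi0_inv, ← H.toPi0_mul]
  exact N.jtn_iff_toPi0_mem

noncomputable def cosetsEquiv : Cosets H N.carrier ≃ H.Pi0 ⧸ N.pi0Subgroup :=
  (Equiv.subtypeEquivRight fun T => by simp only [lcoset_eq_preimage]).trans
    N.toQuotient_surjective.fibersEquiv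

theorem cosetsEquiv_cst (g : P) : N.cosetsEquiv (cst H N.carrier g) = N.toQuotient g :=
  N.toQuotient_surjective.fibersEquiv_apply_of_mem (by
    show g ∈ H.lcoset g N.carrier
    rw [lcoset_eq_preimage]; rfl)

theorem toQuotient_mul [N.pi0Subgroup.Normal] (a b : P) :
    N.toQuotient (H.mul (a, b)) = N.toQuotient a * N.toQuotient b := rfl

theorem toQuotient_inv [N.pi0Subgroup.Normal] (a : P) :
    N.toQuotient (H.inv a) = (N.toQuotient a)⁻¹ := rfl

theorem toQuotient_pt [N.pi0Subgroup.Normal] : N.toQuotient H.pt = 1 := rfl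

end SubHGroup

/-- For a normal sub-H-group `N` of `P`, the set `P/N` of left cosets of `N`, with
multiplication `(g₁N)(g₂N) = (g₁·g₂)N` and inverse `(gN)⁻¹ = η(g)N`, is a well-defined
group with identity the coset `p₀N`. -/
theorem stmt_9 {P : Type u} [TopologicalSpace P] (H : HGroup P) (N : SubHGroup H)
    (hN : N.Normal) :
    ∃ m : Cosets H N.carrier → Cosets H N.carrier → Cosets H N.carrier,
    ∃ i : Cosets H N.carrier → Cosets H N.carrier,
      (∀ g₁ g₂ : P,
        m (cst H N.carrier g₁) (cst H N.carrier g₂) = cst H N.carrier (H.mul (g₁, g₂))) ∧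
      (∀ g : P, i (cst H N.carrier g) = cst H N.carrier (H.inv g)) ∧
      (∀ a b c, m (m a b) c = m a (m b c)) ∧
      (∀ a, m (cst H N.carrier H.pt) a = a) ∧
      (∀ a, m a (cst H N.carrier H.pt) = a) ∧
      (∀ a, m (i a) a = cst H N.carrier H.pt) ∧
      (∀ a, m a (i a) = cst H N.carrier H.pt) := by
  have := hN.pi0Subgroup_normal
  set e := N.cosetsEquiv
  let := e.group
  have e_mul : ∀ a b, e (a * b) = e a * e b := fun a b => e.apply_symm_apply _
  have e_inv : ∀ a, e a⁻¹ = (e a)⁻¹ := fun a => e.apply_symm_apply _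
  have cst_pt : cst H N.carrier H.pt = 1 :=
    e.injective (by rw [N.cosetsEquiv_cst, N.toQuotient_pt]; exact (e.apply_symm_apply 1).symm)
  refine ⟨(· * ·), (·⁻¹), fun g₁ g₂ => e.injective ?_, fun g => e.injective ?_, mul_assoc,
    fun a => by simp only [cst_pt, one_mul], fun a => by simp only [cst_pt, mul_one],
    fun a => by simp only [cst_pt, inv_mul_cancel], fun a => by simp only [cst_pt, mul_inv_cancel]⟩
  · simp only [e_mul, e, SubHGroup.cosetsEquiv_cst, SubHGroup.toQuotient_mul]
  · simp only [e_inv, e, SubHGroup.cosetsEquiv_cst, SubHGroup.toQuotient_inv]
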